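/- arXiv:1908.01427 — 5 statements merged into one kernel-verified Lean document; each statement's English description precedes it below -/
import Mathlib

section
/- Let w ∈ ℝ^n be such that T_w is a regular triangulation of A. Then for every w' ∈ ℝ^n the following are equivalent: (i) the set of facets of T_{w'} coincides with the set of facets of T_w; (ii) w'B_σ > 0 for every facet σ of T_w. Consequently, the set C(T_w) := {w' ∈ ℝ^n : the facets of T_{w'} equal the facets of T_w} is a nonempty open convex cone in ℝ^n (it contains w, is open, is closed under addition, and is closed under multiplication by positive real scalars). -/
open Matrix

/-- `τ ∈ T_w`. -/
def memTw {d n : ℕ} (A : Matrix (Fin d) (Fin n) ℤ) (w : Fin n → ℝ)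
    (τ : Finset (Fin n)) : Prop :=
  ∃ c : Fin d → ℝ, (∀ j ∈ τ, (∑ i, c i * (A i j : ℝ)) = w j) ∧
    ∀ j ∉ τ, (∑ i, c i * (A i j : ℝ)) < w j

/-- The cone of nonnegative real combinations of the columns `a_j`, `j ∈ τ`. -/
def posCone {d n : ℕ} (A : Matrix (Fin d) (Fin n) ℤ) (τ : Finset (Fin n)) :
    Set (Fin d → ℝ) :=
  {x | ∃ lam : Fin n → ℝ, (∀ j, 0 ≤ lam j) ∧ x = fun i => ∑ j ∈ τ, lam j * (A i j : ℝ)}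

/-- `τ` is a facet of `T_w`: `τ ∈ T_w` and `rank A_τ = d`, i.e. the columns
indexed by `τ` span `ℝ^d`. -/
def isFacet {d n : ℕ} (A : Matrix (Fin d) (Fin n) ℤ) (w : Fin n → ℝ)
    (τ : Finset (Fin n)) : Prop :=
  memTw A w τ ∧
    Submodule.span ℝ (Set.range fun j : {j // j ∈ τ} => fun i => (A i j.1 : ℝ)) = ⊤

/-- `T_w` is a regular triangulation of `A`: every facet `σ` satisfies `|σ| = d`
and `det A_σ ≠ 0` (equivalently, its columns are linearly independent), and
`pos(A) = ⋃_{σ facet} pos(σ)`. -/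
def isRegTriang {d n : ℕ} (A : Matrix (Fin d) (Fin n) ℤ) (w : Fin n → ℝ) : Prop :=
  (∀ σ : Finset (Fin n), isFacet A w σ → σ.card = d ∧
      LinearIndependent ℝ (fun j : {j // j ∈ σ} => fun i => (A i j.1 : ℝ))) ∧
    posCone A Finset.univ = ⋃ σ ∈ {σ : Finset (Fin n) | isFacet A w σ}, posCone A σ

/-- `w' B_σ > 0`: for every `j ∉ σ`, writing `a_j = ∑_{k ∈ σ} g_k a_k`, one has
`w'_j - ∑_{k ∈ σ} g_k w'_k > 0`. -/
def wBpos {d n : ℕ} (A : Matrix (Fin d) (Fin n) ℤ) (w' : Fin n → ℝ)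
    (σ : Finset (Fin n)) : Prop :=
  ∀ j ∉ σ, ∀ g : Fin n → ℝ,
    (∀ i, (A i j : ℝ) = ∑ k ∈ σ, g k * (A i k : ℝ)) →
      0 < w' j - ∑ k ∈ σ, g k * w' k

/-- `C(T_w)`: the set of `w'` whose regular subdivision has the same facets as `T_w`. -/
def cTw {d n : ℕ} (A : Matrix (Fin d) (Fin n) ℤ) (w : Fin n → ℝ) : Set (Fin n → ℝ) :=
  {w' | ∀ τ : Finset (Fin n), isFacet A w' τ ↔ isFacet A w τ}

/-!
For a maximal simplex `σ`, `w' B_σ > 0` says exactly that the linear function agreeing with `w'`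
on the columns of `σ` lies strictly below `w'` at every other column, i.e. `σ ∈ T_{w'}`. So (ii)
says that every facet of `T_w` is a cell of `T_{w'}`. Conversely, if `τ` is a facet of `T_{w'}`,
the point `∑_{j ∈ τ} a_j` lies in `pos(σ)` for some facet `σ` of `T_w`; evaluating the liftings
of `τ` and `σ` at this point forces `τ ⊆ σ`, and `|σ| = d ≤ |τ|` gives `τ = σ`.
Since each `w' B_σ > 0` is a finite system of strict linear inequalities, `C(T_w)` is an open
convex cone.
-/

section

variable {d n : ℕ}

def realCol (A : Matrix (Fin d) (Fin n) ℤ) (j : Fin n) : Fin d → ℝ := fun i => (A i j : ℝ)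

/-- Equivalent to `|σ| = d` and `det A_σ ≠ 0`. -/
def IsMaxSimplex (A : Matrix (Fin d) (Fin n) ℤ) (σ : Finset (Fin n)) : Prop :=
  LinearIndependent ℝ (fun j : σ => realCol A j) ∧
    Submodule.span ℝ (Set.range fun j : σ => realCol A j) = ⊤

def secondaryCone (A : Matrix (Fin d) (Fin n) ℤ) (w : Fin n → ℝ) : ConvexCone ℝ (Fin n → ℝ) where
  carrier := {w' | ∀ σ, isFacet A w σ → wBpos A w' σ}
  smul_mem' t ht w' hw' σ hσ j hj g hg := by
    simpa only [Pi.smul_apply, smul_eq_mul, mul_sub, Finset.mul_sum, mul_left_comm t] using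
      mul_pos ht (hw' σ hσ j hj g hg)
  add_mem' w₁ h₁ w₂ h₂ σ hσ j hj g hg := by
    have := add_pos (h₁ σ hσ j hj g hg) (h₂ σ hσ j hj g hg)
    simp only [Pi.add_apply, mul_add, Finset.sum_add_distrib]
    linarith

variable {A : Matrix (Fin d) (Fin n) ℤ} {w : Fin n → ℝ} {σ τ : Finset (Fin n)}

lemma realCol_eq_sum_iff {j : Fin n} {g : Fin n → ℝ} :
    realCol A j = ∑ k ∈ σ, g k • realCol A k ↔ ∀ i, (A i j : ℝ) = ∑ k ∈ σ, g k * (A i k : ℝ) := by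
  simp [funext_iff, realCol, Finset.sum_apply]

lemma mem_posCone_iff {x : Fin d → ℝ} :
    x ∈ posCone A σ ↔ ∃ μ : Fin n → ℝ, (∀ j, 0 ≤ μ j) ∧ x = ∑ k ∈ σ, μ k • realCol A k := by
  simp [posCone, funext_iff, realCol, Finset.sum_apply]

lemma memTw_iff_exists_dotProduct :
    memTw A w τ ↔ ∃ c : Fin d → ℝ,
      (∀ j ∈ τ, c ⬝ᵥ realCol A j = w j) ∧ ∀ j ∉ τ, c ⬝ᵥ realCol A j < w j :=
  Iff.rfl

lemma dotProduct_sum_smul_realCol {c : Fin d → ℝ} (hc : ∀ k ∈ σ, c ⬝ᵥ realCol A k = w k)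
    (g : Fin n → ℝ) : c ⬝ᵥ ∑ k ∈ σ, g k • realCol A k = ∑ k ∈ σ, g k * w k := by
  rw [dotProduct_sum]
  exact Finset.sum_congr rfl fun k hk => by rw [dotProduct_smul, hc k hk, smul_eq_mul]

lemma wBpos_of_memTw (h : memTw A w σ) : wBpos A w σ := by
  obtain ⟨c, heq, hlt⟩ := memTw_iff_exists_dotProduct.mp h
  intro j hj g hg
  have := dotProduct_sum_smul_realCol heq g
  rw [← realCol_eq_sum_iff.mpr hg] at this
  linarith [hlt j hj]

lemma exists_realCol_eq_sum_of_span_eq_top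
    (hσ : Submodule.span ℝ (Set.range fun j : σ => realCol A j) = ⊤) (j : Fin n) :
    ∃ g : Fin n → ℝ, realCol A j = ∑ k ∈ σ, g k • realCol A k := by
  have hj : realCol A j ∈ Submodule.span ℝ (realCol A '' σ) := by
    rw [Set.image_eq_range]
    exact hσ.ge Submodule.mem_top
  obtain ⟨g, hg⟩ := (Submodule.mem_span_image_finset_iff_exists_fun' ℝ).mp hj
  exact ⟨g, hg.symm⟩

lemma IsMaxSimplex.exists_dotProduct_realCol_eq (hσ : IsMaxSimplex A σ) (y : Fin n → ℝ) :
    ∃ c : Fin d → ℝ, ∀ k ∈ σ, c ⬝ᵥ realCol A k = y k := by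
  let b := Module.Basis.mk hσ.1 hσ.2.ge
  refine ⟨(dotProductEquiv ℝ (Fin d)).symm (b.constr ℝ fun k => y k), fun k hk => ?_⟩
  have hb : realCol A k = b ⟨k, hk⟩ := by simp [b]
  rw [hb, ← dotProductEquiv_apply_apply, LinearEquiv.apply_symm_apply]
  exact b.constr_basis ℝ _ _

lemma IsMaxSimplex.memTw_of_forall_exists (hσ : IsMaxSimplex A σ)
    (h : ∀ j ∉ σ, ∃ g : Fin n → ℝ,
      realCol A j = ∑ k ∈ σ, g k • realCol A k ∧ ∑ k ∈ σ, g k * w k < w j) :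
    memTw A w σ := by
  obtain ⟨c, hc⟩ := hσ.exists_dotProduct_realCol_eq w
  refine memTw_iff_exists_dotProduct.mpr ⟨c, hc, fun j hj => ?_⟩
  obtain ⟨g, hg, hlt⟩ := h j hj
  rwa [hg, dotProduct_sum_smul_realCol hc]

lemma IsMaxSimplex.memTw_iff_wBpos (hσ : IsMaxSimplex A σ) : memTw A w σ ↔ wBpos A w σ := by
  refine ⟨wBpos_of_memTw, fun h => hσ.memTw_of_forall_exists fun j hj => ?_⟩
  obtain ⟨g, hg⟩ := exists_realCol_eq_sum_of_span_eq_top hσ.2 j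
  have := h j hj g (realCol_eq_sum_iff.mp hg)
  exact ⟨g, hg, by linarith⟩

lemma IsMaxSimplex.isOpen_setOf_wBpos (hσ : IsMaxSimplex A σ) :
    IsOpen {w : Fin n → ℝ | wBpos A w σ} := by
  choose g hg using exists_realCol_eq_sum_of_span_eq_top hσ.2
  have hset : {w : Fin n → ℝ | wBpos A w σ} =
      ⋂ j ∈ σᶜ, {w | ∑ k ∈ σ, g j k * w k < w j} := by
    ext w
    simp only [Set.mem_ofPred_eq, Set.mem_iInter, Finset.mem_compl]
    refine ⟨fun h j hj => ?_, fun h => wBpos_of_memTw <| hσ.memTw_of_forall_exists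
      fun j hj => ⟨g j, hg j, h j hj⟩⟩
    linarith [h j hj (g j) (realCol_eq_sum_iff.mp (hg j))]
  rw [hset]
  exact isOpen_biInter_finset fun j _ => isOpen_lt (by fun_prop) (by fun_prop)

lemma dotProduct_realCol_le {c : Fin d → ℝ} (heq : ∀ j ∈ τ, c ⬝ᵥ realCol A j = w j)
    (hlt : ∀ j ∉ τ, c ⬝ᵥ realCol A j < w j) (j : Fin n) : c ⬝ᵥ realCol A j ≤ w j := by
  by_cases hj : j ∈ τ
  · exact (heq j hj).le
  · exact (hlt j hj).le

lemma memTw.subset_of_sum_realCol_mem_posCone (hτ : memTw A w τ) (hσ : memTw A w σ)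
    (hx : ∑ j ∈ τ, realCol A j ∈ posCone A σ) : τ ⊆ σ := by
  obtain ⟨cτ, hτeq, hτlt⟩ := memTw_iff_exists_dotProduct.mp hτ
  obtain ⟨cσ, hσeq, hσlt⟩ := memTw_iff_exists_dotProduct.mp hσ
  obtain ⟨μ, hμ, hx⟩ := mem_posCone_iff.mp hx
  have hle := dotProduct_realCol_le hσeq hσlt
  have hsum : ∑ j ∈ τ, w j ≤ ∑ j ∈ τ, cσ ⬝ᵥ realCol A j :=
    calc ∑ j ∈ τ, w j = cτ ⬝ᵥ ∑ k ∈ σ, μ k • realCol A k := by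
          rw [← hx, dotProduct_sum]
          exact Finset.sum_congr rfl fun j hj => (hτeq j hj).symm
      _ = ∑ k ∈ σ, μ k * cτ ⬝ᵥ realCol A k := by
          simp only [dotProduct_sum, dotProduct_smul, smul_eq_mul]
      _ ≤ ∑ k ∈ σ, μ k * w k := Finset.sum_le_sum fun k _ =>
          mul_le_mul_of_nonneg_left (dotProduct_realCol_le hτeq hτlt k) (hμ k)
      _ = cσ ⬝ᵥ ∑ j ∈ τ, realCol A j := by rw [hx, dotProduct_sum_smul_realCol hσeq]
      _ = ∑ j ∈ τ, cσ ⬝ᵥ realCol A j := dotProduct_sum _ _ _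
  have heq := (Finset.sum_eq_sum_iff_of_le fun j _ => hle j).mp
    (le_antisymm (Finset.sum_le_sum fun j _ => hle j) hsum)
  intro j hj
  by_contra hjσ
  exact (hσlt j hjσ).ne (heq j hj)

lemma card_le_of_span_realCol_eq_top
    (h : Submodule.span ℝ (Set.range fun j : τ => realCol A j) = ⊤) : d ≤ τ.card := by
  have := finrank_range_le_card (R := ℝ) fun j : τ => realCol A j
  rwa [Set.finrank, h, finrank_top, Module.finrank_fin_fun, Fintype.card_coe] at this

lemma isRegTriang.isMaxSimplex_of_isFacet (hw : isRegTriang A w) (hσ : isFacet A w σ) :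
    IsMaxSimplex A σ :=
  ⟨(hw.1 σ hσ).2, hσ.2⟩

lemma isRegTriang.isFacet_of_forall_memTw (hw : isRegTriang A w) {w' : Fin n → ℝ}
    (h : ∀ σ, isFacet A w σ → memTw A w' σ) (hτ : isFacet A w' τ) : isFacet A w τ := by
  classical
  have hx : ∑ j ∈ τ, realCol A j ∈ posCone A Finset.univ :=
    mem_posCone_iff.mpr ⟨fun j => if j ∈ τ then 1 else 0, fun j => by positivity,
      by simp [ite_smul, Finset.sum_ite_mem]⟩
  rw [hw.2] at hx
  simp only [Set.mem_iUnion, Set.mem_ofPred_eq] at hx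
  obtain ⟨σ, hσ, hxσ⟩ := hx
  have hsub := hτ.1.subset_of_sum_realCol_mem_posCone (h σ hσ) hxσ
  obtain rfl : τ = σ := Finset.eq_of_subset_of_card_le hsub
    ((hw.1 σ hσ).1.trans_le (card_le_of_span_realCol_eq_top hτ.2))
  exact hσ

lemma isRegTriang.forall_isFacet_iff_iff (hw : isRegTriang A w) (w' : Fin n → ℝ) :
    (∀ τ, isFacet A w' τ ↔ isFacet A w τ) ↔ ∀ σ, isFacet A w σ → wBpos A w' σ := by
  refine ⟨fun h σ hσ => wBpos_of_memTw ((h σ).2 hσ).1, fun h τ => ?_⟩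
  have hmem : ∀ σ, isFacet A w σ → memTw A w' σ := fun σ hσ =>
    (hw.isMaxSimplex_of_isFacet hσ).memTw_iff_wBpos.mpr (h σ hσ)
  exact ⟨hw.isFacet_of_forall_memTw hmem, fun hτ => ⟨hmem τ hτ, hτ.2⟩⟩

lemma isRegTriang.cTw_eq_secondaryCone (hw : isRegTriang A w) :
    cTw A w = secondaryCone A w :=
  Set.ext hw.forall_isFacet_iff_iff

lemma isRegTriang.isOpen_secondaryCone (hw : isRegTriang A w) :
    IsOpen (secondaryCone A w : Set (Fin n → ℝ)) := by
  have hset : (secondaryCone A w : Set (Fin n → ℝ)) =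
      ⋂ σ, ⋂ (_ : isFacet A w σ), {w' | wBpos A w' σ} := by
    ext w'
    simp only [Set.mem_iInter, Set.mem_ofPred_eq]
    rfl
  rw [hset]
  exact isOpen_iInter_of_finite fun σ => isOpen_iInter_of_finite fun hσ =>
    (hw.isMaxSimplex_of_isFacet hσ).isOpen_setOf_wBpos

end

theorem stmt_1_general {d n : ℕ} (A : Matrix (Fin d) (Fin n) ℤ)
    (w : Fin n → ℝ) (hw : isRegTriang A w) :
    (∀ w' : Fin n → ℝ,
        (∀ τ : Finset (Fin n), isFacet A w' τ ↔ isFacet A w τ) ↔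
          ∀ σ : Finset (Fin n), isFacet A w σ → wBpos A w' σ) ∧
      w ∈ cTw A w ∧ IsOpen (cTw A w) ∧ Convex ℝ (cTw A w) ∧
      (∀ w₁ ∈ cTw A w, ∀ w₂ ∈ cTw A w, w₁ + w₂ ∈ cTw A w) ∧
      (∀ w' ∈ cTw A w, ∀ t : ℝ, 0 < t → t • w' ∈ cTw A w) := by
  have hself : w ∈ cTw A w := fun _ => Iff.rfl
  rw [hw.cTw_eq_secondaryCone] at hself ⊢
  exact ⟨hw.forall_isFacet_iff_iff, hself, hw.isOpen_secondaryCone, (secondaryCone A w).convex,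
    fun _ h₁ _ h₂ => (secondaryCone A w).add_mem h₁ h₂,
    fun _ h _ ht => (secondaryCone A w).smul_mem ht h⟩

theorem stmt_1 {d n : ℕ} (A : Matrix (Fin d) (Fin n) ℤ)
    (hrank : (A.map (Int.cast : ℤ → ℝ)).rank = d)
    (w : Fin n → ℝ) (hw : isRegTriang A w) :
    (∀ w' : Fin n → ℝ,
        (∀ τ : Finset (Fin n), isFacet A w' τ ↔ isFacet A w τ) ↔
          ∀ σ : Finset (Fin n), isFacet A w σ → wBpos A w' σ) ∧
      w ∈ cTw A w ∧ IsOpen (cTw A w) ∧ Convex ℝ (cTw A w) ∧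
      (∀ w₁ ∈ cTw A w, ∀ w₂ ∈ cTw A w, w₁ + w₂ ∈ cTw A w) ∧
      (∀ w' ∈ cTw A w, ∀ t : ℝ, 0 < t → t • w' ∈ cTw A w) :=
  stmt_1_general A w hw
end

section
/- If w ∈ ℝ^n has all coordinates strictly positive, then pos(A) = ⋃_{τ ∈ T_w} pos(τ); that is, every element of the cone pos(A) is a nonnegative real combination of the columns a_j with j ∈ τ, for some subset τ ∈ T_w. -/
/-!
For `x ∈ pos(A)` minimise `∑ λⱼ wⱼ` over the representations `x = ∑ λⱼ aⱼ`, `λ ≥ 0`. The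
objective is bounded below since `w ≥ 0`, and the minimum `μ` is attained because finitely
generated cones are closed: by the conic Carathéodory theorem such a cone is a finite union of
cones over linearly independent vectors, i.e. of linear images of orthants. Farkas' lemma for
the lifted vectors `(aⱼ, wⱼ)` and `-(x, μ)` gives a dual solution `c` with `⟨c, aⱼ⟩ ≤ wⱼ` and
`⟨c, x⟩ ≥ μ`, and complementary slackness forces `λⱼ = 0` unless `⟨c, aⱼ⟩ = wⱼ`. Hence `x`
lies in `pos(τ)` for the set `τ ∈ T_w` of tight indices.
-/

open Matrix

section ConeOn

variable {ι E : Type*} [AddCommGroup E] [Module ℝ E] (v : ι → E)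

def coneOn (σ : Finset ι) : PointedCone ℝ E where
  carrier := {x | ∃ t : ι → ℝ, (∀ j, 0 ≤ t j) ∧ ∑ j ∈ σ, t j • v j = x}
  zero_mem' := ⟨0, fun _ => le_rfl, by simp⟩
  add_mem' := by
    rintro _ _ ⟨t, ht, rfl⟩ ⟨s, hs, rfl⟩
    exact ⟨t + s, fun j => add_nonneg (ht j) (hs j), by simp [add_smul, Finset.sum_add_distrib]⟩
  smul_mem' := by
    rintro c _ ⟨t, ht, rfl⟩
    exact ⟨(c : ℝ) • t, fun j => mul_nonneg c.2 (ht j), by simp [Finset.smul_sum, mul_smul]⟩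

variable {v}

theorem mem_coneOn {σ : Finset ι} {x : E} :
    x ∈ coneOn v σ ↔ ∃ t : ι → ℝ, (∀ j, 0 ≤ t j) ∧ ∑ j ∈ σ, t j • v j = x :=
  Iff.rfl

theorem mem_coneOn_of_mem {σ : Finset ι} {j : ι} (hj : j ∈ σ) : v j ∈ coneOn v σ := by
  classical
  exact ⟨Pi.single j 1, fun i => by by_cases h : i = j <;> simp [h],
    by simp [Pi.single_apply, hj]⟩

theorem coneOn_mono {σ τ : Finset ι} (h : σ ⊆ τ) : coneOn v σ ≤ coneOn v τ := by
  classical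
  rintro _ ⟨t, ht, rfl⟩
  refine ⟨fun j => if j ∈ σ then t j else 0,
    fun j => by by_cases hj : j ∈ σ <;> simp [hj, ht], ?_⟩
  simp only [ite_smul, zero_smul, Finset.sum_ite_mem, Finset.inter_eq_right.mpr h]

theorem exists_pos_relation_of_not_linearIndepOn {σ : Finset ι}
    (h : ¬LinearIndepOn ℝ v (σ : Set ι)) :
    ∃ g : ι → ℝ, (∀ j ∉ σ, g j = 0) ∧ ∑ j ∈ σ, g j • v j = 0 ∧ ∃ j ∈ σ, 0 < g j := by
  classical
  obtain ⟨f, hf, i, hi, hfi⟩ := not_linearIndepOn_finset_iff.mp h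
  refine ⟨fun j => if j ∈ σ then f j / f i else 0, fun j hj => if_neg hj, ?_, i, hi,
    by simp [hi, hfi]⟩
  show ∑ j ∈ σ, (if j ∈ σ then f j / f i else 0) • v j = 0
  rw [Finset.sum_congr rfl fun j hj => by rw [if_pos hj, div_eq_inv_mul, mul_smul],
    ← Finset.smul_sum, hf, smul_zero]

/-- Pivoting along the relation `g` until the first coefficient hits zero. -/
theorem exists_mem_coneOn_erase [DecidableEq ι] {σ : Finset ι} {g t : ι → ℝ}
    (hg_supp : ∀ j ∉ σ, g j = 0) (hg : ∑ j ∈ σ, g j • v j = 0) (hpos : ∃ j ∈ σ, 0 < g j)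
    (ht : ∀ j, 0 ≤ t j) :
    ∃ j₀ ∈ σ, ∑ j ∈ σ, t j • v j ∈ coneOn v (σ.erase j₀) := by
  obtain ⟨j₀, hj₀, hmin⟩ := (σ.filter (0 < g ·)).exists_min_image (fun j => t j / g j) <| by
    obtain ⟨j, hj, hgj⟩ := hpos
    exact ⟨j, Finset.mem_filter.mpr ⟨hj, hgj⟩⟩
  rw [Finset.mem_filter] at hj₀
  set α := t j₀ / g j₀
  have hα : 0 ≤ α := div_nonneg (ht j₀) hj₀.2.le
  refine ⟨j₀, hj₀.1, fun j => t j - α * g j, fun j => sub_nonneg.mpr ?_, ?_⟩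
  · rcases le_or_gt (g j) 0 with hgj | hgj
    · exact (mul_nonpos_of_nonneg_of_nonpos hα hgj).trans (ht j)
    · have hjσ : j ∈ σ := by
        by_contra hj
        exact hgj.ne' (hg_supp j hj)
      exact (le_div_iff₀ hgj).mp (hmin j (Finset.mem_filter.mpr ⟨hjσ, hgj⟩))
  · rw [Finset.sum_erase σ (show (t j₀ - α * g j₀) • v j₀ = 0 by
      rw [div_mul_cancel₀ _ hj₀.2.ne', sub_self, zero_smul])]
    simp only [sub_smul, Finset.sum_sub_distrib, mul_smul, ← Finset.smul_sum, hg, smul_zero,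
      sub_zero]

/-- Carathéodory's theorem for cones. -/
theorem exists_linearIndepOn_of_mem_coneOn {σ : Finset ι} {x : E} (hx : x ∈ coneOn v σ) :
    ∃ τ ⊆ σ, LinearIndepOn ℝ v (τ : Set ι) ∧ x ∈ coneOn v τ := by
  classical
  induction σ using Finset.strongInduction with
  | H σ ih =>
    by_cases hσ : LinearIndepOn ℝ v (σ : Set ι)
    · exact ⟨σ, subset_rfl, hσ, hx⟩
    obtain ⟨t, ht, rfl⟩ := hx
    obtain ⟨g, hg_supp, hg, hpos⟩ := exists_pos_relation_of_not_linearIndepOn hσ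
    obtain ⟨j₀, hj₀, hx⟩ := exists_mem_coneOn_erase hg_supp hg hpos ht
    obtain ⟨τ, hτ, hτv, hxτ⟩ := ih _ (Finset.erase_ssubset hj₀) hx
    exact ⟨τ, hτ.trans (Finset.erase_subset _ _), hτv, hxτ⟩

theorem coe_coneOn_eq_image (σ : Finset ι) :
    (coneOn v σ : Set E) =
      Fintype.linearCombination ℝ (fun j : (σ : Set ι) => v j) '' Set.Ici 0 := by
  ext x
  simp only [SetLike.mem_coe, mem_coneOn, Set.mem_image, Set.mem_Ici,
    Fintype.linearCombination_apply]
  constructor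
  · rintro ⟨t, ht, rfl⟩
    exact ⟨fun j => t j, fun j => ht j, Finset.sum_coe_sort σ (fun j => t j • v j)⟩
  · rintro ⟨t, ht, rfl⟩
    classical
    refine ⟨fun j => if h : j ∈ σ then t ⟨j, h⟩ else 0,
      fun j => by dsimp only; split_ifs with h; exacts [ht ⟨j, h⟩, le_rfl], ?_⟩
    rw [← Finset.sum_coe_sort σ]
    simp

theorem sum_smul_prodMk (w : ι → ℝ) (t : ι → ℝ) (σ : Finset ι) :
    ∑ j ∈ σ, t j • (v j, w j) = (∑ j ∈ σ, t j • v j, ∑ j ∈ σ, t j * w j) := by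
  ext <;> simp [Prod.fst_sum, Prod.snd_sum]

/-- Adding a representation of `(0, -1)` to one of `(x, μ)` would give a cheaper one of `x`. -/
theorem zero_neg_one_notMem_coneOn_of_isLeast [Fintype ι] (w : ι → ℝ) {x : E} {μ : ℝ}
    (hμ : IsLeast {r | (x, r) ∈ coneOn (fun j => (v j, w j)) Finset.univ} μ) :
    ((0 : E), (-1 : ℝ)) ∉
      coneOn (fun o : Option ι => o.elim (-x, -μ) fun j => (v j, w j)) Finset.univ := by
  set C := coneOn (fun j => (v j, w j)) Finset.univ
  rintro ⟨t, ht, hq⟩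
  simp only [Fintype.sum_option, Option.elim_none, Option.elim_some] at hq
  set a := 1 + t none
  have ha : 0 < a := by linarith [ht none]
  have hmem : a⁻¹ • (∑ j, t (some j) • (v j, w j) + (x, μ)) ∈ C :=
    C.smul_mem (inv_nonneg.mpr ha.le) (C.add_mem ⟨fun j => t (some j), fun j => ht _, rfl⟩ hμ.1)
  have heq : a⁻¹ • (∑ j, t (some j) • (v j, w j) + (x, μ)) = (x, μ - a⁻¹) := by
    rw [eq_sub_of_add_eq' hq]
    simp only [Prod.smul_mk, smul_neg, smul_eq_mul, mul_neg, Prod.mk_sub_mk, sub_neg_eq_add,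
      zero_add, Prod.mk_add_mk, smul_add, Prod.mk.injEq]
    have ha' := ha.ne'
    constructor
    · match_scalars
      field_simp
      exact add_comm _ _
    · field_simp
      ring
  have := hμ.2 (show (x, μ - a⁻¹) ∈ C from heq ▸ hmem)
  linarith [inv_pos.mpr ha]

end ConeOn

section Closed

variable {ι E : Type*} [AddCommGroup E] [Module ℝ E] [TopologicalSpace E]
  [IsTopologicalAddGroup E] [ContinuousSMul ℝ E] [T2Space E] {v : ι → E}

theorem isClosed_coneOn_of_linearIndepOn {σ : Finset ι} (hσ : LinearIndepOn ℝ v (σ : Set ι)) :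
    IsClosed (coneOn v σ : Set E) := by
  rw [coe_coneOn_eq_image]
  exact (LinearMap.isClosedEmbedding_of_injective (LinearMap.ker_eq_bot.mpr
    (linearIndependent_iff_injective_fintypeLinearCombination.mp hσ))).isClosedMap _ isClosed_Ici

variable (v) in
theorem isClosed_coneOn (σ : Finset ι) : IsClosed (coneOn v σ : Set E) := by
  classical
  have hunion : (coneOn v σ : Set E) =
      ⋃ τ ∈ σ.powerset.filter (fun τ : Finset ι => LinearIndepOn ℝ v (τ : Set ι)),
        coneOn v τ := by
    refine subset_antisymm (fun x hx => ?_) (Set.iUnion₂_subset fun τ hτ => ?_)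
    · obtain ⟨τ, hτσ, hτ, hxτ⟩ := exists_linearIndepOn_of_mem_coneOn hx
      exact Set.mem_biUnion (Finset.mem_filter.mpr ⟨Finset.mem_powerset.mpr hτσ, hτ⟩) hxτ
    · exact coneOn_mono (Finset.mem_powerset.mp (Finset.mem_filter.mp hτ).1)
  rw [hunion]
  exact isClosed_biUnion_finset fun τ hτ =>
    isClosed_coneOn_of_linearIndepOn (Finset.mem_filter.mp hτ).2

end Closed

section Duality

variable {ι E : Type*} [Fintype ι] [AddCommGroup E] [Module ℝ E] [TopologicalSpace E]
  [IsTopologicalAddGroup E] [ContinuousSMul ℝ E] [T2Space E] [LocallyConvexSpace ℝ E]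
  {v : ι → E} {w : ι → ℝ}

theorem exists_dual_of_isLeast {x : E} {μ : ℝ}
    (hμ : IsLeast {r | (x, r) ∈ coneOn (fun j => (v j, w j)) Finset.univ} μ) :
    ∃ φ : StrongDual ℝ E, (∀ j, φ (v j) ≤ w j) ∧ μ ≤ φ x := by
  set u : Option ι → E × ℝ := fun o => o.elim (-x, -μ) fun j => (v j, w j)
  have hq := zero_neg_one_notMem_coneOn_of_isLeast w hμ
  obtain ⟨f, hf, hfq⟩ :=
    ProperCone.hyperplane_separation_point ⟨coneOn u Finset.univ, isClosed_coneOn u _⟩ hq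
  have hgen : ∀ o, 0 ≤ f (u o) := fun o => hf _ (mem_coneOn_of_mem (Finset.mem_univ o))
  set s := f (0, 1)
  have hs : 0 < s := by
    have : f (0, -1) = -s := by rw [← map_neg]; simp
    linarith
  set g := f.comp (ContinuousLinearMap.inl ℝ E ℝ)
  have hsplit : ∀ p : E × ℝ, f p = g p.1 + p.2 * s := by
    intro p
    rw [show p = (p.1, 0) + p.2 • (0, 1) by ext <;> simp, map_add, map_smul, smul_eq_mul]
    simp [g, s]
  refine ⟨-s⁻¹ • g, fun j => ?_, ?_⟩
  · have : 0 ≤ g (v j) + w j * s := hsplit (v j, w j) ▸ hgen (some j)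
    rw [_root_.smul_apply, smul_eq_mul, show -s⁻¹ * g (v j) = -g (v j) / s by ring,
      div_le_iff₀ hs]
    linarith
  · have : 0 ≤ g (-x) + -μ * s := hsplit (-x, -μ) ▸ hgen none
    rw [_root_.smul_apply, smul_eq_mul, show -s⁻¹ * g x = -g x / s by ring,
      le_div_iff₀ hs]
    linarith [map_neg g x]

theorem exists_dual_complementary_slackness (hw : ∀ j, 0 ≤ w j) {x : E}
    (hx : x ∈ coneOn v Finset.univ) :
    ∃ φ : StrongDual ℝ E, (∀ j, φ (v j) ≤ w j) ∧
      x ∈ coneOn v (Finset.univ.filter fun j => φ (v j) = w j) := by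
  set S := {r | (x, r) ∈ coneOn (fun j => (v j, w j)) Finset.univ}
  have hS_closed : IsClosed S :=
    (isClosed_coneOn _ _).preimage (continuous_const.prodMk continuous_id)
  have hS_nonempty : S.Nonempty := by
    obtain ⟨t, ht, rfl⟩ := hx
    exact ⟨∑ j, t j * w j, t, ht, sum_smul_prodMk w t _⟩
  have hS_bdd : BddBelow S := by
    refine ⟨0, fun r ⟨t, ht, hr⟩ => ?_⟩
    rw [sum_smul_prodMk, Prod.mk.injEq] at hr
    exact hr.2 ▸ Finset.sum_nonneg fun j _ => mul_nonneg (ht j) (hw j)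
  have hμ := hS_closed.isLeast_csInf hS_nonempty hS_bdd
  obtain ⟨φ, hφ, hφx⟩ := exists_dual_of_isLeast hμ
  obtain ⟨t, ht, htx⟩ := hμ.1
  rw [sum_smul_prodMk, Prod.mk.injEq] at htx
  have hslack_sum : ∑ j, t j * (w j - φ (v j)) = sInf S - φ x := by
    simp only [mul_sub, Finset.sum_sub_distrib, htx.2, ← htx.1, map_sum, map_smul, smul_eq_mul]
  have hslack : ∀ j, t j * (w j - φ (v j)) = 0 := fun j =>
    (Finset.sum_eq_zero_iff_of_nonneg fun j _ => mul_nonneg (ht j) (sub_nonneg.mpr (hφ j))).mp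
      (le_antisymm (by linarith) (Finset.sum_nonneg fun j _ =>
        mul_nonneg (ht j) (sub_nonneg.mpr (hφ j)))) j (Finset.mem_univ j)
  refine ⟨φ, hφ, t, ht, ?_⟩
  rw [Finset.sum_filter, ← htx.1]
  refine Finset.sum_congr rfl fun j _ => ?_
  split_ifs with h
  · rfl
  · rw [(mul_eq_zero.mp (hslack j)).resolve_right (sub_ne_zero.mpr (Ne.symm h)), zero_smul]

end Duality

theorem posCone_eq_coneOn {d n : ℕ} (A : Matrix (Fin d) (Fin n) ℤ) (τ : Finset (Fin n)) :
    posCone A τ = coneOn (fun j i => (A i j : ℝ)) τ := by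
  ext x
  refine exists_congr fun t => and_congr_right fun _ => ?_
  rw [show (∑ j ∈ τ, t j • fun i => (A i j : ℝ)) = fun i => ∑ j ∈ τ, t j * A i j by
    ext; simp [Finset.sum_apply], eq_comm]

theorem memTw_filter_of_le {d n : ℕ} (A : Matrix (Fin d) (Fin n) ℤ) (w : Fin n → ℝ)
    (φ : StrongDual ℝ (Fin d → ℝ)) (hφ : ∀ j, φ (fun i => (A i j : ℝ)) ≤ w j) :
    memTw A w (Finset.univ.filter fun j => φ (fun i => (A i j : ℝ)) = w j) := by
  have hφ_apply : ∀ y : Fin d → ℝ, ∑ i, φ (Pi.single i 1) * y i = φ y := by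
    intro y
    conv_rhs => rw [← Finset.univ_sum_single y]
    rw [map_sum]
    refine Finset.sum_congr rfl fun i _ => ?_
    rw [mul_comm, ← smul_eq_mul, ← map_smul, ← Pi.single_smul', smul_eq_mul, mul_one]
  refine ⟨fun i => φ (Pi.single i 1), fun j hj => ?_, fun j hj => ?_⟩ <;> rw [hφ_apply]
  · exact (Finset.mem_filter.mp hj).2
  · exact (hφ j).lt_of_ne fun h => hj (Finset.mem_filter.mpr ⟨Finset.mem_univ j, h⟩)

theorem stmt_2_general {d n : ℕ} (A : Matrix (Fin d) (Fin n) ℤ)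
    (w : Fin n → ℝ) (hw : ∀ j, 0 < w j) :
    posCone A Finset.univ = ⋃ τ ∈ {τ : Finset (Fin n) | memTw A w τ}, posCone A τ := by
  simp_rw [posCone_eq_coneOn]
  refine subset_antisymm (fun x hx => ?_)
    (Set.iUnion₂_subset fun τ _ => coneOn_mono (Finset.subset_univ τ))
  obtain ⟨φ, hφ, hxτ⟩ := exists_dual_complementary_slackness (fun j => (hw j).le) hx
  exact Set.mem_biUnion (memTw_filter_of_le A w φ hφ) hxτ

theorem stmt_2 {d n : ℕ} (A : Matrix (Fin d) (Fin n) ℤ)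
    (hrank : (A.map (Int.cast : ℤ → ℝ)).rank = d)
    (w : Fin n → ℝ) (hw : ∀ j, 0 < w j) :
    posCone A Finset.univ = ⋃ τ ∈ {τ : Finset (Fin n) | memTw A w τ}, posCone A τ :=
  stmt_2_general A w hw
end

section
/- Let τ ⊆ {1,…,n} be a subset such that rank(A_τ) = d and pos(A_τ) = pos(A). Let w₀ ∈ ℝ^τ be such that T_{w₀} is a regular triangulation of A_τ, and let w ∈ ℝ^n be such that T_w is a regular triangulation of A. If every facet of T_{w₀} is a facet of T_w, then every facet of T_w is a facet of T_{w₀}; i.e., the two triangulations have exactly the same facets. -/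
open Matrix

/-- `s ∈ T_{w}` computed with respect to the submatrix `A_τ` (only the
coordinates of `w` indexed by `τ` are relevant). -/
def memTwRel {d n : ℕ} (A : Matrix (Fin d) (Fin n) ℤ) (τ : Finset (Fin n))
    (w : Fin n → ℝ) (s : Finset (Fin n)) : Prop :=
  s ⊆ τ ∧ ∃ c : Fin d → ℝ, (∀ j ∈ s, (∑ i, c i * (A i j : ℝ)) = w j) ∧
    ∀ j ∈ τ, j ∉ s → (∑ i, c i * (A i j : ℝ)) < w j

/-- `s` is a facet of `T_w` (with respect to `A_τ`): `s ∈ T_w` and `rank A_s = d`,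
i.e. the columns indexed by `s` span `ℝ^d`. -/
def isFacetRel {d n : ℕ} (A : Matrix (Fin d) (Fin n) ℤ) (τ : Finset (Fin n))
    (w : Fin n → ℝ) (s : Finset (Fin n)) : Prop :=
  memTwRel A τ w s ∧
    Submodule.span ℝ (Set.range fun j : {j // j ∈ s} => fun i => (A i j.1 : ℝ)) = ⊤

/-- `T_w` is a regular triangulation of `A_τ`: every facet `s` satisfies `|s| = d`
and `det A_s ≠ 0` (equivalently, its columns are linearly independent), and
`pos(A_τ) = ⋃_{s facet} pos(s)`. -/
def isRegTriangRel {d n : ℕ} (A : Matrix (Fin d) (Fin n) ℤ) (τ : Finset (Fin n))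
    (w : Fin n → ℝ) : Prop :=
  (∀ s : Finset (Fin n), isFacetRel A τ w s → s.card = d ∧
      LinearIndependent ℝ (fun j : {j // j ∈ s} => fun i => (A i j.1 : ℝ))) ∧
    posCone A τ = ⋃ s ∈ {s : Finset (Fin n) | isFacetRel A τ w s}, posCone A s

theorem stmt_5 {d n : ℕ} (A : Matrix (Fin d) (Fin n) ℤ)
    (hrank : (A.map (Int.cast : ℤ → ℝ)).rank = d)
    (τ : Finset (Fin n))
    (hτrank : Submodule.span ℝ
        (Set.range fun j : {j // j ∈ τ} => fun i => (A i j.1 : ℝ)) = ⊤)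
    (hpos : posCone A τ = posCone A Finset.univ)
    (w₀ : Fin n → ℝ) (hw₀ : isRegTriangRel A τ w₀)
    (w : Fin n → ℝ) (hw : isRegTriangRel A Finset.univ w)
    (hsub : ∀ s : Finset (Fin n), isFacetRel A τ w₀ s → isFacetRel A Finset.univ w s) :
    ∀ s : Finset (Fin n), isFacetRel A Finset.univ w s → isFacetRel A τ w₀ s := by
  intro s hs
  -- witness c for s as a facet of T_w
  obtain ⟨⟨-, c, hceq, hclt⟩, hspan⟩ := hs
  -- the barycenter-like point x = ∑_{j∈s} a_j
  set x : Fin d → ℝ := fun i => ∑ j ∈ s, (A i j : ℝ) with hxdef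
  have hxuniv : x ∈ posCone A Finset.univ := by
    refine ⟨fun j => if j ∈ s then 1 else 0, fun j => by positivity, ?_⟩
    funext i
    simp [hxdef, ite_mul, Finset.sum_ite_mem]
  have hxτ : x ∈ posCone A τ := by rw [hpos]; exact hxuniv
  rw [hw₀.2] at hxτ
  simp only [Set.mem_iUnion, Set.mem_setOf_eq] at hxτ
  obtain ⟨σ, hσ, lam, hlam0, hx'⟩ := hxτ
  have hσw : isFacetRel A Finset.univ w σ := hsub σ hσ
  obtain ⟨⟨-, c', hceq', hclt'⟩, -⟩ := hσw
  -- inner products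
  set ip : (Fin d → ℝ) → Fin n → ℝ := fun e j => ∑ i, e i * (A i j : ℝ) with hip
  have hswap : ∀ e : Fin d → ℝ, (∑ i, e i * x i) = ∑ j ∈ s, ip e j := by
    intro e
    simp only [hxdef, Finset.mul_sum, hip]
    exact Finset.sum_comm
  have hswap' : ∀ e : Fin d → ℝ, (∑ i, e i * x i) = ∑ j ∈ σ, lam j * ip e j := by
    intro e
    rw [hx']
    simp only [Finset.mul_sum, hip]
    rw [Finset.sum_comm]
    congr 1; ext j; congr 1; ext i; ring
  have hcle : ∀ j, ip c j ≤ w j := by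
    intro j
    by_cases hj : j ∈ s
    · exact le_of_eq (hceq j hj)
    · exact le_of_lt (hclt j (Finset.mem_univ j) hj)
  have hcle' : ∀ j, ip c' j ≤ w j := by
    intro j
    by_cases hj : j ∈ σ
    · exact le_of_eq (hceq' j hj)
    · exact le_of_lt (hclt' j (Finset.mem_univ j) hj)
  -- the chain of inequalities
  have key : (∑ j ∈ s, ip c' j) = ∑ j ∈ s, w j := by
    have h1 : (∑ j ∈ s, w j) = ∑ j ∈ s, ip c j :=
      (Finset.sum_congr rfl fun j hj => (hceq j hj).symm)
    have h2 : (∑ j ∈ s, ip c j) ≤ ∑ j ∈ σ, lam j * w j := by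
      rw [← hswap c, hswap' c]
      exact Finset.sum_le_sum fun j _ =>
        mul_le_mul_of_nonneg_left (hcle j) (hlam0 j)
    have h3 : (∑ j ∈ σ, lam j * w j) = ∑ j ∈ s, ip c' j := by
      rw [← hswap c', hswap' c']
      exact Finset.sum_congr rfl fun j hj => by rw [show ip c' j = w j from hceq' j hj]
    have h4 : (∑ j ∈ s, ip c' j) ≤ ∑ j ∈ s, w j :=
      Finset.sum_le_sum fun j _ => hcle' j
    have := h1.trans_le (h2.trans_eq h3)
    linarith
  have heqall : ∀ j ∈ s, ip c' j = w j :=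
    (Finset.sum_eq_sum_iff_of_le fun j _ => hcle' j).mp key
  have hsσ : s ⊆ σ := by
    intro j hj
    by_contra hjσ
    exact absurd (heqall j hj) (ne_of_lt (hclt' j (Finset.mem_univ j) hjσ))
  have hcards : σ.card ≤ s.card := by
    rw [(hw.1 s ⟨⟨Finset.subset_univ s, c, hceq, hclt⟩, hspan⟩).1,
      (hw.1 σ (hsub σ hσ)).1]
  have : s = σ := Finset.eq_of_subset_of_card_le hsσ hcards
  rwa [this]
end

section
/- Let a_1,…,a_m and b be vectors in ℤ^d. If there exist real numbers λ_1,…,λ_m ≥ 0 such that b = Σ_{i=1}^m λ_i a_i, then there exist a positive integer N and natural numbers m_1,…,m_m such that N·b = Σ_{i=1}^m m_i a_i. -/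
/-!
By the conic version of Carathéodory's theorem, `b` is a nonnegative real combination of a
linearly independent subfamily of the `a i`. The coefficients of such a combination are unique;
since the system is defined over `ℚ` and has a solution over `ℝ`, it has one over `ℚ`, so these
coefficients are nonnegative rationals. Clearing their denominators gives `N` and the `c i`.
-/

open Finset

section Caratheodory

variable {𝕜 M ι : Type*} [Field 𝕜] [LinearOrder 𝕜] [IsStrictOrderedRing 𝕜]
  [AddCommGroup M] [Module 𝕜 M] {v : ι → M} {s : Finset ι}

theorem exists_sum_smul_eq_zero_pos_of_not_linearIndepOn (hs : ¬LinearIndepOn 𝕜 v s) :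
    ∃ c : ι → 𝕜, ∑ i ∈ s, c i • v i = 0 ∧ ∃ i ∈ s, 0 < c i := by
  obtain ⟨c, hc, i, hi, hci⟩ := not_linearIndepOn_finset_iff.1 hs
  rcases hci.lt_or_gt with hneg | hpos
  · exact ⟨-c, by simp [hc], i, hi, neg_pos.2 hneg⟩
  · exact ⟨c, hc, i, hi, hpos⟩

/-- The exchange step of Carathéodory's theorem: moving along a linear relation among the `v i`
until the first coefficient hits zero. -/
theorem exists_nonneg_sum_erase_eq_of_not_linearIndepOn [DecidableEq ι] (lam : ι → 𝕜)
    (hlam : ∀ i ∈ s, 0 ≤ lam i) (hs : ¬LinearIndepOn 𝕜 v s) :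
    ∃ j ∈ s, ∃ lam' : ι → 𝕜, (∀ i ∈ s.erase j, 0 ≤ lam' i) ∧
      ∑ i ∈ s.erase j, lam' i • v i = ∑ i ∈ s, lam i • v i := by
  obtain ⟨c, hc, i₁, hi₁, hci₁⟩ := exists_sum_smul_eq_zero_pos_of_not_linearIndepOn hs
  obtain ⟨j, hj, hmin⟩ := (s.filter fun i ↦ 0 < c i).exists_min_image (fun i ↦ lam i / c i)
    ⟨i₁, mem_filter.2 ⟨hi₁, hci₁⟩⟩
  rw [mem_filter] at hj
  set t := lam j / c j
  have ht : 0 ≤ t := div_nonneg (hlam j hj.1) hj.2.le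
  refine ⟨j, hj.1, fun i ↦ lam i - t * c i, fun i hi ↦ ?_, ?_⟩
  · have his := mem_of_mem_erase hi
    rcases le_or_gt (c i) 0 with hci | hci
    · nlinarith [hlam i his]
    · have := mul_le_mul_of_nonneg_right (hmin i (mem_filter.2 ⟨his, hci⟩)) hci.le
      rw [div_mul_cancel₀ _ hci.ne'] at this
      linarith
  · rw [sum_erase _ (by simp [t, div_mul_cancel₀ _ hj.2.ne'])]
    simp [sub_smul, sum_sub_distrib, mul_smul, ← smul_sum, hc]

theorem exists_linearIndepOn_nonneg_sum_eq (v : ι → M) (s : Finset ι) (lam : ι → 𝕜)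
    (hlam : ∀ i ∈ s, 0 ≤ lam i) :
    ∃ t ⊆ s, ∃ μ : ι → 𝕜, (∀ i ∈ t, 0 ≤ μ i) ∧ LinearIndepOn 𝕜 v t ∧
      ∑ i ∈ t, μ i • v i = ∑ i ∈ s, lam i • v i := by
  classical
  induction s using Finset.strongInduction generalizing lam with
  | H s ih =>
    by_cases hs : LinearIndepOn 𝕜 v s
    · exact ⟨s, subset_rfl, lam, hlam, hs, rfl⟩
    obtain ⟨j, hj, lam', hlam', hsum⟩ := exists_nonneg_sum_erase_eq_of_not_linearIndepOn lam hlam hs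
    obtain ⟨t, hts, μ, hμ, hind, hμsum⟩ := ih _ (erase_ssubset hj) lam' hlam'
    exact ⟨t, hts.trans (erase_subset j s), μ, hμ, hind, hμsum.trans hsum⟩

end Caratheodory

theorem exists_algebraMap_eq_of_linearIndepOn {K L ι n : Type*} [Field K] [Field L]
    [Algebra K L] (v : ι → n → K) (x : n → K) (s : Finset ι) (μ : ι → L)
    (hv : LinearIndepOn L (fun i ↦ algebraMap K L ∘ v i) s)
    (hx : ∑ i ∈ s, μ i • (algebraMap K L ∘ v i) = algebraMap K L ∘ x) :
    ∃ q : ι → K, (∀ i ∈ s, algebraMap K L (q i) = μ i) ∧ ∑ i ∈ s, q i • v i = x := by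
  have hmap : ∀ q : ι → K,
      ∑ i ∈ s, algebraMap K L (q i) • (algebraMap K L ∘ v i) =
        algebraMap K L ∘ ∑ i ∈ s, q i • v i := by
    intro q; funext k; simp [Algebra.smul_def]
  -- a `K`-linear retraction `π : L → K` carries the relation down to `K`
  obtain ⟨π, hπ⟩ := (Algebra.linearMap K L).exists_leftInverse_of_injective
    (LinearMap.ker_eq_bot.2 (algebraMap K L).injective)
  have hπ_algebraMap : ∀ c, π (algebraMap K L c) = c := LinearMap.congr_fun hπ
  have hπ_mul : ∀ (y : L) (c : K), π (y * algebraMap K L c) = π y * c := by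
    intro y c
    rw [mul_comm, ← Algebra.smul_def, map_smul, smul_eq_mul, mul_comm]
  have hqx : ∑ i ∈ s, π (μ i) • v i = x := by
    funext k
    simpa [hπ_mul, hπ_algebraMap] using congrArg π (congrFun hx k)
  refine ⟨fun i ↦ π (μ i), fun i hi ↦ ?_, hqx⟩
  have hrel : ∑ i ∈ s, (μ i - algebraMap K L (π (μ i))) • (algebraMap K L ∘ v i) = 0 := by
    simp only [sub_smul, sum_sub_distrib, hx, hmap, hqx, sub_self]
  exact (sub_eq_zero.1 (linearIndepOn_finset_iff.1 hv _ hrel i hi)).symm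

theorem exists_pos_nat_mul_eq_natCast {ι : Type*} (s : Finset ι) (q : ι → ℚ)
    (hq : ∀ i ∈ s, 0 ≤ q i) :
    ∃ N : ℕ, 0 < N ∧ ∃ c : ι → ℕ, ∀ i ∈ s, (N : ℚ) * q i = c i := by
  refine ⟨∏ i ∈ s, (q i).den, prod_pos fun i _ ↦ (q i).den_pos,
    fun i ↦ (∏ j ∈ s, (q j).den) / (q i).den * (q i).num.toNat, fun i hi ↦ ?_⟩
  obtain ⟨k, hk⟩ := dvd_prod_of_mem (fun j ↦ (q j).den) hi
  have hnum : ((q i).num.toNat : ℚ) = (q i).num := by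
    exact_mod_cast Int.toNat_of_nonneg (Rat.num_nonneg.2 (hq i hi))
  simp only [hk, Nat.mul_div_cancel_left _ (q i).den_pos]
  push_cast
  rw [hnum, ← Rat.den_mul_eq_num]
  ring

theorem stmt_9 {d m : ℕ} (a : Fin m → Fin d → ℤ) (b : Fin d → ℤ)
    (h : ∃ lam : Fin m → ℝ, (∀ i, 0 ≤ lam i) ∧
      ∀ k, (b k : ℝ) = ∑ i, lam i * (a i k : ℝ)) :
    ∃ N : ℕ, 0 < N ∧ ∃ c : Fin m → ℕ,
      ∀ k, (N : ℤ) * b k = ∑ i, (c i : ℤ) * a i k := by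
  obtain ⟨lam, hlam, hb⟩ := h
  set aℚ : Fin m → Fin d → ℚ := fun i k ↦ a i k
  set bℚ : Fin d → ℚ := fun k ↦ b k
  have hbℝ : ∑ i, lam i • (algebraMap ℚ ℝ ∘ aℚ i) = algebraMap ℚ ℝ ∘ bℚ := by
    funext k; simp [aℚ, bℚ, hb k]
  obtain ⟨s, -, μ, hμ, hind, hμb⟩ :=
    exists_linearIndepOn_nonneg_sum_eq (fun i ↦ algebraMap ℚ ℝ ∘ aℚ i) univ lam fun i _ ↦ hlam i
  obtain ⟨q, hqμ, hqb⟩ := exists_algebraMap_eq_of_linearIndepOn aℚ bℚ s μ hind (hμb.trans hbℝ)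
  have hq : ∀ i ∈ s, 0 ≤ q i := fun i hi ↦ by
    simpa [← hqμ i hi] using hμ i hi
  obtain ⟨N, hN, c, hc⟩ := exists_pos_nat_mul_eq_natCast s q hq
  refine ⟨N, hN, fun i ↦ if i ∈ s then c i else 0, fun k ↦ ?_⟩
  have hbk : (b k : ℚ) = ∑ i ∈ s, q i * a i k := by
    simpa [aℚ, bℚ] using (congrFun hqb k).symm
  have hNbk : (N : ℚ) * b k = ∑ i ∈ s, (c i : ℚ) * a i k := by
    rw [hbk, mul_sum]
    exact sum_congr rfl fun i hi ↦ by rw [← mul_assoc, hc i hi]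
  simp only [Nat.cast_ite, Nat.cast_zero, ite_mul, zero_mul, sum_ite_mem, univ_inter]
  exact_mod_cast hNbk
end

section
/- Let σ ⊆ {1,…,n} be a maximal simplex (|σ| = d and A_σ invertible). Then the following are equivalent: (i) (1,…,1)·B_σ ≥ 0 componentwise, i.e., Σ_{i∈σ} (A_σ^{-1}a_j)_i ≤ 1 for every j ∉ σ; (ii) there exists τ ⊆ {1,…,n} with σ ⊆ τ and τ ∈ T_{(1,…,1)} (such a τ automatically satisfies rank(A_τ) = d, so σ is contained in a facet of the regular subdivision Γ_A := T_{(1,…,1)}). -/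
open Matrix

theorem stmt_10 {d n : ℕ} (A : Matrix (Fin d) (Fin n) ℤ)
    (hrank : (A.map (Int.cast : ℤ → ℝ)).rank = d)
    (σ : Finset (Fin n)) (hσcard : σ.card = d)
    (Aσ : Matrix (Fin d) {j // j ∈ σ} ℝ)
    (hAσ : ∀ (i : Fin d) (j : {j // j ∈ σ}), Aσ i j = (A i j.1 : ℝ))
    (S : Matrix {j // j ∈ σ} (Fin d) ℝ)
    (hS₁ : Aσ * S = 1) (hS₂ : S * Aσ = 1) :
    (∀ j ∉ σ, (∑ i : {i // i ∈ σ}, S.mulVec (fun k => (A k j : ℝ)) i) ≤ 1) ↔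
      ∃ τ : Finset (Fin n), σ ⊆ τ ∧ memTw A (fun _ => 1) τ := by
  classical
  constructor
  · intro h
    set c : Fin d → ℝ := fun i => ∑ k : {j // j ∈ σ}, S k i with hc
    have key : ∀ j : Fin n, (∑ i, c i * (A i j : ℝ)) =
        ∑ k : {i // i ∈ σ}, S.mulVec (fun i => (A i j : ℝ)) k := by
      intro j
      simp only [hc, Finset.sum_mul, Matrix.mulVec, dotProduct]
      rw [Finset.sum_comm]
    have hσeq : ∀ j ∈ σ, (∑ i, c i * (A i j : ℝ)) = 1 := by
      intro j hj
      rw [key]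
      have heq : ∀ k : {i // i ∈ σ}, S.mulVec (fun i => (A i j : ℝ)) k
          = (S * Aσ) k ⟨j, hj⟩ := by
        intro k
        simp [Matrix.mulVec, dotProduct, Matrix.mul_apply, hAσ]
      rw [Finset.sum_congr rfl (fun k _ => heq k), hS₂]
      simp [Matrix.one_apply]
    refine ⟨σ ∪ Finset.univ.filter (fun j => (∑ i, c i * (A i j : ℝ)) = 1),
      Finset.subset_union_left, c, ?_, ?_⟩
    · intro j hj
      rcases Finset.mem_union.mp hj with hj | hj
      · exact hσeq j hj
      · exact (Finset.mem_filter.mp hj).2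
    · intro j hj
      simp only [Finset.mem_union, Finset.mem_filter, Finset.mem_univ, true_and,
        not_or] at hj
      have hle : (∑ i, c i * (A i j : ℝ)) ≤ 1 := by
        rw [key]; exact h j hj.1
      exact lt_of_le_of_ne hle hj.2
  · rintro ⟨τ, hστ, c, hc1, hc2⟩
    intro j hj
    set v : {i // i ∈ σ} → ℝ := S.mulVec (fun i => (A i j : ℝ)) with hv
    have h1 : Aσ.mulVec v = fun i => (A i j : ℝ) := by
      rw [hv, Matrix.mulVec_mulVec, hS₁, Matrix.one_mulVec]
    have hAj : ∀ i, (A i j : ℝ) = ∑ k : {i // i ∈ σ}, Aσ i k * v k := by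
      intro i
      have := congrFun h1 i
      simpa [Matrix.mulVec, dotProduct] using this.symm
    have hstep : (∑ i, c i * (A i j : ℝ)) = ∑ k : {i // i ∈ σ}, v k := by
      calc (∑ i, c i * (A i j : ℝ))
          = ∑ i, ∑ k : {i // i ∈ σ}, (c i * Aσ i k) * v k := by
            refine Finset.sum_congr rfl fun i _ => ?_
            rw [hAj i, Finset.mul_sum]
            exact Finset.sum_congr rfl fun k _ => by ring
        _ = ∑ k : {i // i ∈ σ}, (∑ i, c i * Aσ i k) * v k := by
            rw [Finset.sum_comm]
            exact Finset.sum_congr rfl fun k _ => by rw [Finset.sum_mul]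
        _ = ∑ k : {i // i ∈ σ}, v k := by
            refine Finset.sum_congr rfl fun k _ => ?_
            have : (∑ i, c i * Aσ i k) = 1 := by
              have := hc1 k.1 (hστ k.2)
              simpa [hAσ] using this
            rw [this, one_mul]
    rw [← hstep]
    by_cases hjτ : j ∈ τ
    · exact le_of_eq (hc1 j hjτ)
    · exact le_of_lt (hc2 j hjτ)
end
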